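/- Let S be a set of items and let s ≤ t be times such that x t' ∈ S for every time t' with s ≤ t' < t. Then ∑_{ℓ ∈ S} M ℓ t ≥ ∑_{ℓ ∈ S} M ℓ s, i.e. the total memory of the items in S is nondecreasing over any time interval during which only items of S are consumed. -/
import Mathlib


/-- The memory of item `i` at time `t`, given decay rate `r` and selection sequence `x`. -/
def memory {n : ℕ} (r : ℝ) (x : ℕ → Fin n) (i : Fin n) : ℕ → ℝ
  | 0 => 0
  | t + 1 => (1 - r) * memory r x i t + r * (if x t = i then 1 else 0)

lemma memory_nonneg {n : ℕ} (r : ℝ) (hr0 : 0 ≤ r) (hr1 : r ≤ 1) (x : ℕ → Fin n)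
    (i : Fin n) : ∀ t, 0 ≤ memory r x i t
  | 0 => le_refl 0
  | t + 1 => by
    have := memory_nonneg r hr0 hr1 x i t
    simp only [memory]
    have h1 : (0:ℝ) ≤ 1 - r := by linarith
    positivity

lemma sum_memory_le_one {n : ℕ} (r : ℝ) (hr0 : 0 ≤ r) (hr1 : r ≤ 1) (x : ℕ → Fin n)
    (S : Finset (Fin n)) : ∀ t, ∑ ℓ ∈ S, memory r x ℓ t ≤ 1
  | 0 => by simp [memory]
  | t + 1 => by
    have ih := sum_memory_le_one r hr0 hr1 x S t
    simp only [memory, Finset.sum_add_distrib, ← Finset.mul_sum]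
    have h1 : (0:ℝ) ≤ 1 - r := by linarith
    have h2 : ∑ ℓ ∈ S, (if x t = ℓ then (1:ℝ) else 0) ≤ 1 := by
      rw [Finset.sum_ite_eq S (x t) (fun _ => (1:ℝ))]
      split <;> norm_num
    nlinarith

/-- If only items of `S` are consumed during the interval `[s, t)`, then the total memory
of the items in `S` does not decrease from time `s` to time `t`. -/
theorem total_memory_mono (n : ℕ) (hn : 1 ≤ n) (r : ℝ) (hr0 : 0 < r) (hr1 : r < 1)
    (x : ℕ → Fin n) (S : Finset (Fin n)) (s t : ℕ) (hst : s ≤ t)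
    (hS : ∀ t' : ℕ, s ≤ t' → t' < t → x t' ∈ S) :
    ∑ ℓ ∈ S, memory r x ℓ s ≤ ∑ ℓ ∈ S, memory r x ℓ t := by
  induction t with
  | zero =>
    have : s = 0 := Nat.le_zero.mp hst
    subst this; rfl
  | succ t ih =>
    rcases Nat.lt_or_ge s (t + 1) with h | h
    · have hst' : s ≤ t := Nat.lt_succ_iff.mp h
      have ih' := ih hst' (fun t' h1 h2 => hS t' h1 (Nat.lt_succ_of_lt h2))
      refine le_trans ih' ?_
      have hx : x t ∈ S := hS t hst' (Nat.lt_succ_self t)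
      simp only [memory, Finset.sum_add_distrib, ← Finset.mul_sum]
      have h2 : ∑ ℓ ∈ S, (if x t = ℓ then (1:ℝ) else 0) = 1 := by
        rw [Finset.sum_ite_eq S (x t) (fun _ => (1:ℝ))]
        simp [hx]
      rw [h2]
      have hle := sum_memory_le_one r hr0.le hr1.le x S t
      nlinarith
    · have : s = t + 1 := le_antisymm hst h
      subst this; rfl
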